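/- arXiv:2008.02221 — 3 statements merged into one kernel-verified Lean document; each statement's English description precedes it below -/
import Mathlib

section
/- (Lemma 5.3(ii) of the paper) Let A be a Dedekind domain, n ≥ 3, let q ∈ A be a nonzero element generating a proper principal ideal 𝔮 = qA, and let D ∈ Mat_n(A) be a matrix whose determinant divides some power of q in A (equivalently, D becomes invertible over the localization A[1/q]). Then there exists an integer l > 0 such that for every M ∈ E_n(A, 𝔮^l) there exists N ∈ E_n(A, 𝔮) with D·M = N·D in Mat_n(A) (that is, D^{-1}·E_n(A,𝔮)·D ⊇ E_n(A,𝔮^l)). -/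
/-- The set of elementary matrices `1 + a • e i j` (viewed inside `SL n A`)
with off-diagonal position `(i,j)` and entry `a` belonging to the set `S`. -/
def elemSet (n : ℕ) (A : Type*) [CommRing A] (S : Set A) :
    Set (Matrix.SpecialLinearGroup (Fin n) A) :=
  { M | ∃ i j : Fin n, i ≠ j ∧ ∃ a ∈ S,
      (M : Matrix (Fin n) (Fin n) A) = 1 + Matrix.single i j a }

/-- `E_n(A)`: the subgroup of `SL_n(A)` generated by all elementary matrices. -/
def En (n : ℕ) (A : Type*) [CommRing A] :
    Subgroup (Matrix.SpecialLinearGroup (Fin n) A) :=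
  Subgroup.closure (elemSet n A Set.univ)

/-- `F_n(A,𝔮)`: the subgroup generated by elementary matrices with entry in `𝔮`. -/
def Fn (n : ℕ) (A : Type*) [CommRing A] (q : Ideal A) :
    Subgroup (Matrix.SpecialLinearGroup (Fin n) A) :=
  Subgroup.closure (elemSet n A (q : Set A))

/-- `SL_n(A,𝔮)`: the principal congruence subgroup, i.e. the kernel of
reduction `SL_n(A) → SL_n(A/𝔮)`. -/
def SLrel (n : ℕ) (A : Type*) [CommRing A] (q : Ideal A) :
    Subgroup (Matrix.SpecialLinearGroup (Fin n) A) :=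
  (Matrix.SpecialLinearGroup.map (Ideal.Quotient.mk q)).ker

/-- `E_n(A,𝔮)`: the normal closure of `F_n(A,𝔮)` in `E_n(A)`, i.e. the subgroup
generated by all `E_n(A)`-conjugates of elements of `F_n(A,𝔮)`. -/
def EnRel (n : ℕ) (A : Type*) [CommRing A] (q : Ideal A) :
    Subgroup (Matrix.SpecialLinearGroup (Fin n) A) :=
  Subgroup.closure { M | ∃ g ∈ En n A, ∃ f ∈ Fn n A q, M = g * f * g⁻¹ }

/-!
Write `d = det D`. Conjugating a generator `g (1 + d²c eᵢⱼ) g⁻¹` of `E_n(A, d²𝔮)` by `D` gives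
`1 + cd · v wᵀ`, where `v` is the `i`-th column of `D g` and `w`, `λ` are the `j`-th and `i`-th
rows of `g⁻¹ adj D`; thus `wᵀ v = 0` and `λᵀ v = d`. The identity
`d · w = ∑ₚᵣ λₚ wᵣ (vₚ eᵣ - vᵣ eₚ)` splits `1 + cd · v wᵀ` into a product of Koszul transvections
`1 + v zᵀ`, `z = β (vₚ eᵣ - vᵣ eₚ)` with `β ∈ 𝔮`. For `n ≥ 3` such a `z` vanishes at some
coordinate `m`; writing `v = u + vₘ eₘ`, the transvection `1 + v zᵀ` is then the elementary
product `1 + eₘ (vₘ z)ᵀ ∈ F_n(A, 𝔮)` times the commutator of `1 + u eₘᵀ ∈ E_n(A)` and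
`1 + eₘ zᵀ ∈ F_n(A, 𝔮)`. Finally `d ∣ qᵉ` gives `𝔮^(2e+1) ⊆ d²𝔮`.
-/

section

open Matrix

variable {n : ℕ} {A : Type*} [CommRing A]

local notation:1024 "↑ₘ" g:1024 => ((g : Matrix.SpecialLinearGroup (Fin n) A) : Matrix (Fin n) (Fin n) A)

namespace Matrix.SpecialLinearGroup

lemma coe_inv_mul_coe (g : Matrix.SpecialLinearGroup (Fin n) A) : ↑ₘg⁻¹ * ↑ₘg = 1 := by
  rw [← coe_mul, inv_mul_cancel, coe_one]

lemma coe_mul_coe_inv (g : Matrix.SpecialLinearGroup (Fin n) A) : ↑ₘg * ↑ₘg⁻¹ = 1 := by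
  rw [← coe_mul, mul_inv_cancel, coe_one]

lemma coe_inv_eq_one_sub {g : Matrix.SpecialLinearGroup (Fin n) A}
    {P : Matrix (Fin n) (Fin n) A} (hg : ↑ₘg = 1 + P) (hP : P * P = 0) : ↑ₘg⁻¹ = 1 - P := by
  calc ↑ₘg⁻¹ = ↑ₘg⁻¹ * (↑ₘg * (1 - P)) := by
        rw [hg, add_mul, mul_sub, mul_sub, hP]
        simp
    _ = 1 - P := by rw [← Matrix.mul_assoc, coe_inv_mul_coe, Matrix.one_mul]

end Matrix.SpecialLinearGroup

def OneAddMem (H : Subgroup (Matrix.SpecialLinearGroup (Fin n) A)) (X : Matrix (Fin n) (Fin n) A) :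
    Prop :=
  ∃ g ∈ H, ↑ₘg = 1 + X

namespace OneAddMem

variable {H K : Subgroup (Matrix.SpecialLinearGroup (Fin n) A)} {X Y : Matrix (Fin n) (Fin n) A}

lemma zero : OneAddMem H 0 := ⟨1, H.one_mem, by simp⟩

lemma mono (hHK : H ≤ K) (hX : OneAddMem H X) : OneAddMem K X :=
  let ⟨g, hg, hgX⟩ := hX
  ⟨g, hHK hg, hgX⟩

lemma add (hX : OneAddMem H X) (hY : OneAddMem H Y) (hXY : X * Y = 0) :
    OneAddMem H (X + Y) := by
  obtain ⟨g, hg, hgX⟩ := hX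
  obtain ⟨h, hh, hhY⟩ := hY
  refine ⟨g * h, mul_mem hg hh, ?_⟩
  rw [Matrix.SpecialLinearGroup.coe_mul, hgX, hhY, add_mul, mul_add, mul_add, hXY]
  simp only [one_mul, mul_one, add_zero]
  abel

lemma sum {ι : Type*} {s : Finset ι} {X : ι → Matrix (Fin n) (Fin n) A}
    (hX : ∀ i ∈ s, OneAddMem H (X i)) (horth : (s : Set ι).Pairwise fun i j => X i * X j = 0) :
    OneAddMem H (∑ i ∈ s, X i) := by
  classical
  induction s using Finset.induction_on with
  | empty => simpa using zero
  | insert a s has ih =>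
    rw [Finset.sum_insert has]
    refine add (hX a (s.mem_insert_self a))
      (ih (fun i hi => hX i (Finset.mem_insert_of_mem hi))
        (horth.mono (by simp))) ?_
    rw [Finset.mul_sum]
    refine Finset.sum_eq_zero fun i hi => horth (by simp) (by simp [hi]) ?_
    rintro rfl
    exact has hi

lemma vecMulVec_sum {ι : Type*} {s : Finset ι} {v : Fin n → A} {x : ι → Fin n → A}
    (hx : ∀ i ∈ s, OneAddMem H (vecMulVec v (x i))) (hxv : ∀ i ∈ s, x i ⬝ᵥ v = 0) :
    OneAddMem H (vecMulVec v (∑ i ∈ s, x i)) := by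
  have hsum : vecMulVec v (∑ i ∈ s, x i) = ∑ i ∈ s, vecMulVec v (x i) := by
    ext p r
    simp [vecMulVec_apply, Matrix.sum_apply, Finset.mul_sum]
  rw [hsum]
  refine sum hx fun i hi j _ _ => ?_
  dsimp only
  rw [vecMulVec_mul_vecMulVec, hxv i hi, zero_smul, vecMulVec_zero]

end OneAddMem

lemma one_add_mul_one_add_mul_one_sub_mul_one_sub {R : Type*} [Ring R] {P Q : R}
    (hPP : P * P = 0) (hQQ : Q * Q = 0) (hQP : Q * P = 0) :
    (1 + P) * (1 + Q) * (1 - P) * (1 - Q) = 1 + P * Q := by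
  have h₁ : (1 + P) * (1 + Q) * (1 - P) = 1 + Q + P * Q := by
    simp only [add_mul, mul_add, mul_sub, one_mul, mul_one, mul_assoc, hPP, hQP]
    noncomm_ring
  have h₂ : P * Q * Q = 0 := by rw [mul_assoc, hQQ, mul_zero]
  rw [h₁]
  simp only [add_mul, mul_sub, one_mul, mul_one, hQQ, h₂]
  noncomm_ring

lemma Fn_mono {I J : Ideal A} (hIJ : I ≤ J) : Fn n A I ≤ Fn n A J :=
  Subgroup.closure_mono fun _ ⟨i, j, hij, a, ha, hM⟩ => ⟨i, j, hij, a, hIJ ha, hM⟩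

lemma Fn_top : Fn n A ⊤ = En n A := by
  rw [Fn, En, Submodule.top_coe]

lemma Fn_le_EnRel (I : Ideal A) : Fn n A I ≤ EnRel n A I :=
  (Subgroup.closure_le _).mpr fun f hf =>
    Subgroup.subset_closure ⟨1, one_mem _, f, Subgroup.subset_closure hf, by group⟩

lemma EnRel_mono {I J : Ideal A} (hIJ : I ≤ J) : EnRel n A I ≤ EnRel n A J :=
  Subgroup.closure_mono fun _ ⟨g, hg, f, hf, hM⟩ => ⟨g, hg, f, Fn_mono hIJ hf, hM⟩

lemma oneAddMem_Fn_single {I : Ideal A} {i j : Fin n} (hij : i ≠ j) {a : A} (ha : a ∈ I) :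
    OneAddMem (Fn n A I) (single i j a) :=
  ⟨⟨1 + single i j a, det_transvection_of_ne i j hij a⟩,
    Subgroup.subset_closure ⟨i, j, hij, a, ha, rfl⟩, rfl⟩

lemma oneAddMem_Fn_vecMulVec_single_right {I : Ideal A} {m : Fin n} {u : Fin n → A}
    (hum : u m = 0) (hu : ∀ p, u p ∈ I) :
    OneAddMem (Fn n A I) (vecMulVec u (Pi.single m 1)) := by
  have hsum : vecMulVec u (Pi.single m 1) = ∑ p, single p m (u p) := by
    ext p r
    simp [vecMulVec_apply, Matrix.sum_apply, single_apply, Pi.single_apply, ite_and, eq_comm]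
  rw [hsum]
  refine OneAddMem.sum (fun p _ => ?_) fun p _ p' _ _ => ?_
  · by_cases hpm : p = m
    · subst hpm
      simpa [hum] using OneAddMem.zero
    · exact oneAddMem_Fn_single hpm (hu p)
  · by_cases hp'm : p' = m
    · simp [hp'm, hum]
    · exact single_mul_single_of_ne (h := Ne.symm hp'm) ..

lemma oneAddMem_Fn_vecMulVec_single_left {I : Ideal A} {m : Fin n} {w : Fin n → A}
    (hwm : w m = 0) (hw : ∀ p, w p ∈ I) :
    OneAddMem (Fn n A I) (vecMulVec (Pi.single m 1) w) := by
  have hsum : vecMulVec (Pi.single m 1) w = ∑ p, single m p (w p) := by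
    ext p r
    simp [vecMulVec_apply, Matrix.sum_apply, single_apply, Pi.single_apply, ite_and, eq_comm]
  rw [hsum]
  refine OneAddMem.sum (fun p _ => ?_) fun p _ p' _ _ => ?_
  · by_cases hpm : m = p
    · subst hpm
      simpa [hwm] using OneAddMem.zero
    · exact oneAddMem_Fn_single hpm (hw p)
  · by_cases hpm : p = m
    · simp [hpm, hwm]
    · exact single_mul_single_of_ne (h := hpm) ..

lemma OneAddMem.mul_EnRel {I : Ideal A} {P Q : Matrix (Fin n) (Fin n) A}
    (hP : OneAddMem (En n A) P) (hQ : OneAddMem (Fn n A I) Q)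
    (hPP : P * P = 0) (hQQ : Q * Q = 0) (hQP : Q * P = 0) :
    OneAddMem (EnRel n A I) (P * Q) := by
  obtain ⟨g, hg, hgP⟩ := hP
  obtain ⟨f, hf, hfQ⟩ := hQ
  refine ⟨g * f * g⁻¹ * f⁻¹,
    mul_mem (Subgroup.subset_closure ⟨g, hg, f, hf, rfl⟩) (Fn_le_EnRel I (inv_mem hf)), ?_⟩
  simp only [Matrix.SpecialLinearGroup.coe_mul]
  rw [Matrix.SpecialLinearGroup.coe_inv_eq_one_sub hgP hPP,
    Matrix.SpecialLinearGroup.coe_inv_eq_one_sub hfQ hQQ, hgP, hfQ,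
    one_add_mul_one_add_mul_one_sub_mul_one_sub hPP hQQ hQP]

lemma oneAddMem_EnRel_vecMulVec_of_apply_eq_zero {I : Ideal A} {m : Fin n} {u w : Fin n → A}
    (hum : u m = 0) (hwm : w m = 0) (hwu : w ⬝ᵥ u = 0) (hw : ∀ p, w p ∈ I) :
    OneAddMem (EnRel n A I) (vecMulVec u w) := by
  have hP : OneAddMem (En n A) (vecMulVec u (Pi.single m 1)) :=
    Fn_top (n := n) (A := A) ▸ oneAddMem_Fn_vecMulVec_single_right hum fun _ => Submodule.mem_top
  have hQ : OneAddMem (Fn n A I) (vecMulVec (Pi.single m 1) w) :=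
    oneAddMem_Fn_vecMulVec_single_left hwm hw
  convert hP.mul_EnRel hQ ?_ ?_ ?_ using 1 <;>
    simp [vecMulVec_mul_vecMulVec, single_dotProduct, dotProduct_single, hum, hwm, hwu]

lemma oneAddMem_EnRel_vecMulVec {I : Ideal A} {m : Fin n} {v w : Fin n → A}
    (hwm : w m = 0) (hwv : w ⬝ᵥ v = 0) (hw : ∀ p, w p ∈ I) :
    OneAddMem (EnRel n A I) (vecMulVec v w) := by
  set u := v - Pi.single m (v m)
  have hwu : w ⬝ᵥ u = 0 := by simp [u, dotProduct_sub, hwv, dotProduct_single, hwm]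
  have hsplit : vecMulVec v w = vecMulVec (Pi.single m 1) (v m • w) + vecMulVec u w := by
    ext p r
    by_cases hpm : p = m <;> simp [u, vecMulVec_apply, hpm]
  rw [hsplit]
  refine OneAddMem.add ?_ ?_ ?_
  · exact (oneAddMem_Fn_vecMulVec_single_left (by simp [hwm])
      fun p => I.mul_mem_left _ (hw p)).mono (Fn_le_EnRel I)
  · exact oneAddMem_EnRel_vecMulVec_of_apply_eq_zero (by simp [u]) hwm hwu hw
  · simp [vecMulVec_mul_vecMulVec, hwu]

lemma exists_ne_and_ne_of_three_le (hn : 3 ≤ n) (j k : Fin n) : ∃ m : Fin n, m ≠ j ∧ m ≠ k := by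
  obtain ⟨m, -, hm⟩ := Finset.exists_mem_notMem_of_card_lt_card (s := {j, k}) (t := Finset.univ)
    (by simpa using (Finset.card_le_two (a := j) (b := k)).trans_lt (by omega))
  simp only [Finset.mem_insert, Finset.mem_singleton, not_or] at hm
  exact ⟨m, hm⟩

lemma koszul_dotProduct (v : Fin n → A) (j k : Fin n) :
    (v j • Pi.single k 1 - v k • Pi.single j 1) ⬝ᵥ v = 0 := by
  simp [sub_dotProduct, single_dotProduct, mul_comm]

lemma oneAddMem_EnRel_vecMulVec_koszul (hn : 3 ≤ n) {I : Ideal A} (v : Fin n → A) (j k : Fin n)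
    {β : A} (hβ : β ∈ I) :
    OneAddMem (EnRel n A I) (vecMulVec v (β • (v j • Pi.single k 1 - v k • Pi.single j 1))) := by
  obtain ⟨m, hmj, hmk⟩ := exists_ne_and_ne_of_three_le hn j k
  refine oneAddMem_EnRel_vecMulVec (m := m) ?_ ?_ fun p => ?_
  · simp [hmj, hmk]
  · rw [smul_dotProduct, koszul_dotProduct, smul_zero]
  · exact I.mul_mem_right _ hβ

lemma sum_sum_smul_koszul (u w v : Fin n → A) :
    ∑ p, ∑ r, (u p * w r) • (v p • Pi.single r 1 - v r • Pi.single p 1) =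
      (u ⬝ᵥ v) • w - (w ⬝ᵥ v) • u := by
  ext x
  simp only [Finset.sum_apply, Pi.sub_apply, Pi.smul_apply, Pi.single_apply, smul_eq_mul,
    mul_sub, mul_ite, mul_one, mul_zero, Finset.sum_sub_distrib, Finset.sum_ite_eq,
    Finset.sum_ite_irrel, Finset.sum_const_zero, Finset.mem_univ, if_true, dotProduct,
    Finset.sum_mul]
  congr 1 <;> exact Finset.sum_congr rfl fun _ _ => by ring

lemma oneAddMem_EnRel_vecMulVec_smul (hn : 3 ≤ n) {I : Ideal A} {c : A} (hc : c ∈ I)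
    {u v w : Fin n → A} (hwv : w ⬝ᵥ v = 0) :
    OneAddMem (EnRel n A I) (vecMulVec v ((c * (u ⬝ᵥ v)) • w)) := by
  have hkoszul : (c * (u ⬝ᵥ v)) • w =
      ∑ p, ∑ r, (c * (u p * w r)) • (v p • Pi.single r 1 - v r • Pi.single p 1) := by
    simp_rw [mul_smul c, ← Finset.smul_sum, sum_sum_smul_koszul, hwv, zero_smul, sub_zero]
  have hdot (p r : Fin n) (b : A) : (b • (v p • Pi.single r 1 - v r • Pi.single p 1)) ⬝ᵥ v = 0 := by
    rw [smul_dotProduct, koszul_dotProduct, smul_zero]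
  rw [hkoszul]
  refine OneAddMem.vecMulVec_sum (fun p _ => OneAddMem.vecMulVec_sum (fun r _ => ?_)
    fun r _ => hdot p r _) fun p _ => ?_
  · exact oneAddMem_EnRel_vecMulVec_koszul hn v p r (I.mul_mem_right _ hc)
  · rw [sum_dotProduct]
    exact Finset.sum_eq_zero fun r _ => hdot p r _

lemma exists_EnRel_mul_conj_single_eq (hn : 3 ≤ n) {I : Ideal A}
    (D : Matrix (Fin n) (Fin n) A) {G G' : Matrix (Fin n) (Fin n) A} (hG : G' * G = 1)
    {i j : Fin n} (hij : i ≠ j) {c : A} (hc : c ∈ I) :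
    ∃ N ∈ EnRel n A I, D * (G * (1 + single i j (D.det ^ 2 * c)) * G') = ↑ₘN * D := by
  set X := D * G
  set Y := G' * adjugate D
  have hYX : Y * X = D.det • 1 := by
    calc Y * X = G' * (adjugate D * D) * G := by simp only [X, Y, Matrix.mul_assoc]
      _ = D.det • 1 := by
        rw [adjugate_mul, Matrix.mul_smul, Matrix.mul_one, Matrix.smul_mul, hG]
  have hdet : Y.row i ⬝ᵥ X.col i = D.det := by
    rw [show Y.row i ⬝ᵥ X.col i = (Y * X) i i from rfl, hYX]
    simp
  have horth : Y.row j ⬝ᵥ X.col i = 0 := by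
    rw [show Y.row j ⬝ᵥ X.col i = (Y * X) j i from rfl, hYX]
    simp [hij.symm]
  obtain ⟨N, hN, hNc⟩ := oneAddMem_EnRel_vecMulVec_smul hn hc (u := Y.row i) horth
  refine ⟨N, hN, ?_⟩
  have hrank : vecMulVec (X.col i) (Y.row j) = X * single i j 1 * Y := by
    rw [single_eq_single_vecMulVec_single, mul_vecMulVec, vecMulVec_mul, mulVec_single_one,
      single_one_vecMul]
  rw [hNc, hdet, vecMulVec_smul, hrank]
  have hGG' : G * G' = 1 := mul_eq_one_comm.mp hG
  rw [show single i j (D.det ^ 2 * c) = (D.det ^ 2 * c) • single i j 1 by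
    rw [smul_single, smul_eq_mul, mul_one]]
  simp only [X, Y, Matrix.mul_add, Matrix.add_mul, Matrix.mul_one, Matrix.one_mul,
    Matrix.mul_smul, Matrix.smul_mul, Matrix.mul_assoc, adjugate_mul, hGG', smul_smul]
  congr 2
  ring

/-- The subgroup `{M | D M D⁻¹ ∈ K}`, phrased without inverting `D`. -/
def conjComap (D : Matrix (Fin n) (Fin n) A) (K : Subgroup (Matrix.SpecialLinearGroup (Fin n) A)) :
    Subgroup (Matrix.SpecialLinearGroup (Fin n) A) where
  carrier := {M | ∃ N ∈ K, D * ↑ₘM = ↑ₘN * D}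
  one_mem' := ⟨1, K.one_mem, by simp⟩
  mul_mem' := by
    rintro M M' ⟨N, hN, hMN⟩ ⟨N', hN', hMN'⟩
    refine ⟨N * N', mul_mem hN hN', ?_⟩
    simp only [Matrix.SpecialLinearGroup.coe_mul]
    rw [← Matrix.mul_assoc, hMN, Matrix.mul_assoc, hMN', Matrix.mul_assoc]
  inv_mem' := by
    rintro M ⟨N, hN, hMN⟩
    refine ⟨N⁻¹, inv_mem hN, ?_⟩
    calc D * ↑ₘM⁻¹ = ↑ₘN⁻¹ * (↑ₘN * D) * ↑ₘM⁻¹ := by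
          rw [← Matrix.mul_assoc, Matrix.SpecialLinearGroup.coe_inv_mul_coe, Matrix.one_mul]
      _ = ↑ₘN⁻¹ * D := by
          rw [← hMN, Matrix.mul_assoc, Matrix.mul_assoc,
            Matrix.SpecialLinearGroup.coe_mul_coe_inv, Matrix.mul_one]

theorem EnRel_span_det_sq_mul_le_conjComap (hn : 3 ≤ n) (D : Matrix (Fin n) (Fin n) A)
    (I : Ideal A) : EnRel n A (Ideal.span {D.det ^ 2} * I) ≤ conjComap D (EnRel n A I) := by
  refine (Subgroup.closure_le _).mpr ?_
  rintro _ ⟨g, -, f, hf, rfl⟩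
  suffices Fn n A (Ideal.span {D.det ^ 2} * I) ≤
      (conjComap D (EnRel n A I)).comap (MulAut.conj g).toMonoidHom from this hf
  refine (Subgroup.closure_le _).mpr ?_
  rintro f ⟨i, j, hij, a, ha, hfa⟩
  obtain ⟨c, hc, rfl⟩ := Ideal.mem_span_singleton_mul.mp ha
  obtain ⟨N, hN, hDN⟩ := exists_EnRel_mul_conj_single_eq hn D
    (Matrix.SpecialLinearGroup.coe_inv_mul_coe g) hij hc
  refine ⟨N, hN, ?_⟩
  simpa [Matrix.SpecialLinearGroup.coe_mul, hfa, Matrix.mul_assoc] using hDN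

end

theorem conj_EnRel_general (A : Type*) [CommRing A] (n : ℕ) (hn : 3 ≤ n) (q : A)
    (D : Matrix (Fin n) (Fin n) A) (hD : ∃ e : ℕ, D.det ∣ q ^ e) :
    ∃ l : ℕ, 0 < l ∧
      ∀ M ∈ EnRel n A (Ideal.span {q} ^ l), ∃ N ∈ EnRel n A (Ideal.span {q}),
        D * (M : Matrix (Fin n) (Fin n) A) = (N : Matrix (Fin n) (Fin n) A) * D := by
  obtain ⟨e, t, ht⟩ := hD
  have hle : Ideal.span {q} ^ (2 * e + 1) ≤ Ideal.span {D.det ^ 2} * Ideal.span {q} := by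
    rw [Ideal.span_singleton_pow, Ideal.span_singleton_mul_span_singleton,
      Ideal.span_singleton_le_span_singleton]
    exact ⟨t ^ 2, by rw [pow_succ, pow_mul', ht]; ring⟩
  exact ⟨2 * e + 1, by omega, fun M hM =>
    EnRel_span_det_sq_mul_le_conjComap hn D _ (EnRel_mono hle hM)⟩

/-- **Lemma 5.3(ii) of the paper.** Let `A` be a Dedekind domain, `n ≥ 3`,
`q ∈ A` a nonzero element generating a proper principal ideal `𝔮 = qA`, and
`D ∈ Mat_n(A)` a matrix whose determinant divides a power of `q` (so `D` is
invertible over `A[1/q]`). Then there exists `l > 0` such that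
`D⁻¹ · E_n(A,𝔮) · D ⊇ E_n(A,𝔮^l)`, i.e. every `M ∈ E_n(A,𝔮^l)` satisfies
`D·M = N·D` in `Mat_n(A)` for some `N ∈ E_n(A,𝔮)`. -/
theorem conj_EnRel (A : Type*) [CommRing A] [IsDedekindDomain A] (n : ℕ) (hn : 3 ≤ n)
    (q : A) (hq0 : q ≠ 0) (hq : Ideal.span {q} ≠ ⊤)
    (D : Matrix (Fin n) (Fin n) A) (hD : ∃ e : ℕ, D.det ∣ q ^ e) :
    ∃ l : ℕ, 0 < l ∧
      ∀ M ∈ EnRel n A (Ideal.span {q} ^ l), ∃ N ∈ EnRel n A (Ideal.span {q}),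
        D * (M : Matrix (Fin n) (Fin n) A) = (N : Matrix (Fin n) (Fin n) A) * D :=
  conj_EnRel_general A n hn q D hD
end

section
/- (Lemma 5.7 of the paper) Let A be an integral domain with fraction field K, n ≥ 3, q ∈ A a nonzero element, a_2,…,a_n ∈ A, and let σ = q·I + Σ_{i=2}^n a_i·e_{1i} ∈ Mat_n(A); σ is invertible over K, with σ^{-1} = q^{-1}(I − Σ_{i=2}^n (a_i/q)·e_{1i}). Let 𝔭 ⊆ A be an ideal and let ℰ be a subgroup of SL_n(A) such that: (i) I + c·e_{ij} ∈ ℰ for every c ∈ A and all indices 2 ≤ i, j ≤ n with i ≠ j; and (ii) for every b ∈ 𝔭 and every 2 ≤ i ≤ n, the matrix σ·(I + b q²·e_{i1})·σ^{-1}, computed in Mat_n(K), has all entries in A and the resulting element of SL_n(A) belongs to ℰ. Then for all indices 2 ≤ k, l ≤ n with k ≠ l and every b ∈ 𝔭, the matrix I + a_l b q²·e_{k1} − a_k a_l b q·e_{kk} − a_l² b q·e_{kl} − a_k b q²·e_{l1} + a_k a_l b q·e_{ll} + a_k² b q·e_{lk} has determinant 1 and belongs to ℰ. -/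
/-!
Put `σ = q • 1 + e₀ a'ᵀ` with `a' = a` off the index `0` and `a'₀ = 0`, and `v = a_l e_k - a_k e_l`,
so that `a' ⬝ᵥ v = 0`. Matrices `1 + v xᵀ` with `x ⬝ᵥ v = 0` multiply by adding the `x`'s, and
`σ v = q v` gives `σ (1 + v (c q e₀)ᵀ) = (1 + v (c (q e₀ - a'))ᵀ) σ`. Hence the product of the two
elements of (ii) for `a_l b` at `k` and `-a_k b` at `l` is `1 + b q v (q e₀ - a')ᵀ`. The target
matrix is `1 + b q v (q e₀ - a_k e_k - a_l e_l)ᵀ`, which is that product times `1 + b q v wᵀ` with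
`w` supported off `{0, k, l}`; the latter factor is a product of elementary matrices from (i).
-/

open Matrix

namespace Matrix

variable {n R : Type*} [Fintype n] [DecidableEq n] [CommRing R]

omit [Fintype n] in
theorem vecMulVec_single_single (i j : n) (α β : R) :
    vecMulVec (Pi.single i α) (Pi.single j β) = single i j (α * β) := by
  ext r s
  by_cases hr : i = r <;> by_cases hs : j = s <;> simp [vecMulVec_apply, hr, hs]

theorem sum_filter_ne_single_eq_vecMulVec_update (z : n) (a : n → R) :
    ∑ i ∈ Finset.univ.filter (fun i => i ≠ z), single z i (a i) =
      vecMulVec (Pi.single z 1) (Function.update a z 0) := by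
  ext i j
  rw [Matrix.sum_apply]
  rcases eq_or_ne z i with rfl | hi
  · by_cases hj : z = j <;> simp [single_apply, vecMulVec_apply, hj, eq_comm]
  · simp [vecMulVec_apply, hi, Ne.symm hi]

omit [Fintype n] in
theorem one_add_vecMulVec_single_add_single_eq {z k l : n} (ak al b q : R) :
    1 + vecMulVec (Pi.single k al + Pi.single l (-ak))
      ((b * q) • (q • Pi.single z 1 - Pi.single k ak - Pi.single l al)) =
    (1 + single k z (al * b * q ^ 2) - single k k (ak * al * b * q) - single k l (al ^ 2 * b * q)
      - single l z (ak * b * q ^ 2) + single l l (ak * al * b * q)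
      + single l k (ak ^ 2 * b * q) : Matrix n n R) := by
  simp only [Pi.single_neg, neg_vecMulVec, add_vecMulVec, vecMulVec_smul, vecMulVec_sub,
    vecMulVec_single_single, smul_add, smul_sub, smul_neg, smul_single, smul_eq_mul]
  ring_nf
  abel

theorem one_add_vecMulVec_mul_one_add_vecMulVec {u x w y : n → R} (h : x ⬝ᵥ w = 0) :
    (1 + vecMulVec u x) * (1 + vecMulVec w y) = 1 + vecMulVec u x + vecMulVec w y := by
  rw [mul_add, add_mul, add_mul, vecMulVec_mul_vecMulVec, h, zero_smul, vecMulVec_zero]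
  simp only [one_mul, mul_one, add_zero]

theorem one_add_vecMulVec_add_mem {S : Submonoid (Matrix n n R)} {u x y : n → R}
    (hx : 1 + vecMulVec u x ∈ S) (hy : 1 + vecMulVec u y ∈ S) (h : x ⬝ᵥ u = 0) :
    1 + vecMulVec u (x + y) ∈ S := by
  rw [vecMulVec_add, ← add_assoc, ← one_add_vecMulVec_mul_one_add_vecMulVec h]
  exact S.mul_mem hx hy

theorem one_add_vecMulVec_sum_mem {ι : Type*} {S : Submonoid (Matrix n n R)} (u : n → R)
    (s : Finset ι) (x : ι → n → R) (hx : ∀ i ∈ s, x i ⬝ᵥ u = 0)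
    (hS : ∀ i ∈ s, 1 + vecMulVec u (x i) ∈ S) : 1 + vecMulVec u (∑ i ∈ s, x i) ∈ S := by
  classical
  induction s using Finset.induction_on with
  | empty => simp [S.one_mem]
  | insert i s hi ih =>
    rw [Finset.sum_insert hi]
    exact one_add_vecMulVec_add_mem (hS i (Finset.mem_insert_self i s))
      (ih (fun j hj => hx j (Finset.mem_insert_of_mem hj))
        (fun j hj => hS j (Finset.mem_insert_of_mem hj)))
      (hx i (Finset.mem_insert_self i s))

theorem one_add_vecMulVec_single_add_single_mem {S : Submonoid (Matrix n n R)} {z k l : n}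
    (hS : ∀ i j, i ≠ z → j ≠ z → i ≠ j → ∀ c, 1 + single i j c ∈ S)
    (hk : k ≠ z) (hl : l ≠ z) (α β : R) {x : n → R}
    (hxz : x z = 0) (hxk : x k = 0) (hxl : x l = 0) :
    1 + vecMulVec (Pi.single k α + Pi.single l β) x ∈ S := by
  rw [← Finset.univ_sum_single x]
  refine one_add_vecMulVec_sum_mem _ _ _ (fun j _ => ?_) (fun j _ => ?_)
  · by_cases hjk : j = k
    · simp [hjk, hxk]
    by_cases hjl : j = l
    · simp [hjl, hxl]
    simp [hjk, hjl]
  · by_cases hj : j = z ∨ j = k ∨ j = l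
    · have hxj : x j = 0 := by rcases hj with rfl | rfl | rfl <;> assumption
      simp [hxj, S.one_mem]
    obtain ⟨hjz, hjk, hjl⟩ : j ≠ z ∧ j ≠ k ∧ j ≠ l := by tauto
    rw [add_vecMulVec, ← add_assoc,
      ← one_add_vecMulVec_mul_one_add_vecMulVec (by simp [hjl]),
      vecMulVec_single_single, vecMulVec_single_single]
    exact S.mul_mem (hS k j hk hjz (Ne.symm hjk) _) (hS l j hl hjz (Ne.symm hjl) _)

theorem smul_one_add_vecMulVec_mul_smul_one_sub_vecMulVec (q : R) {u a : n → R}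
    (h : a ⬝ᵥ u = 0) :
    (q • 1 + vecMulVec u a) * (q • 1 - vecMulVec u a) = q ^ 2 • (1 : Matrix n n R) := by
  rw [mul_sub, add_mul, add_mul, vecMulVec_mul_vecMulVec, h, zero_smul, vecMulVec_zero]
  simp [smul_smul, pow_two]

theorem det_smul_one_add_vecMulVec_ne_zero [IsDomain R] {q : R} (hq : q ≠ 0) {u a : n → R}
    (h : a ⬝ᵥ u = 0) : (q • 1 + vecMulVec u a).det ≠ 0 := by
  intro hdet
  have := congrArg det (smul_one_add_vecMulVec_mul_smul_one_sub_vecMulVec q h)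
  rw [det_mul, hdet, zero_mul, det_smul, det_one, mul_one] at this
  exact pow_ne_zero _ (pow_ne_zero 2 hq) this.symm

theorem smul_one_add_vecMulVec_mul_one_add_vecMulVec (q c : R) {u a v : n → R}
    (hu : u ⬝ᵥ u = 1) (hau : a ⬝ᵥ u = 0) (hav : a ⬝ᵥ v = 0) :
    (q • 1 + vecMulVec u a) * (1 + vecMulVec v ((c * q) • u)) =
      (1 + vecMulVec v (c • (q • u - a))) * (q • 1 + vecMulVec u a) := by
  rw [mul_add, mul_one, mul_vecMulVec, add_mul, one_mul, vecMulVec_mul]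
  congr 1
  simp only [add_mulVec, smul_mulVec, one_mulVec, vecMulVec_mulVec, hav, MulOpposite.op_zero,
    zero_smul, add_zero, vecMulVec_smul, smul_vecMulVec, vecMul_add, vecMul_smul, vecMul_one,
    vecMul_vecMulVec, smul_dotProduct, sub_dotProduct, hu, smul_eq_mul, mul_one, hau, sub_zero]
  rw [← vecMulVec_smul, ← vecMulVec_smul]
  congr 1
  module

theorem mem_of_mapMatrix_conj_mem {K : Type*} [CommRing K] {f : R →+* K}
    (hf : Function.Injective f) {S : Submonoid (Matrix n n R)} {σ P₁ P₂ Q : Matrix n n R}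
    (hσ : IsUnit (f.mapMatrix σ).det) (h : σ * (P₁ * P₂) = Q * σ)
    (h₁ : ∃ M ∈ S, f.mapMatrix M = f.mapMatrix σ * f.mapMatrix P₁ * (f.mapMatrix σ)⁻¹)
    (h₂ : ∃ M ∈ S, f.mapMatrix M = f.mapMatrix σ * f.mapMatrix P₂ * (f.mapMatrix σ)⁻¹) :
    Q ∈ S := by
  obtain ⟨M₁, hM₁, e₁⟩ := h₁
  obtain ⟨M₂, hM₂, e₂⟩ := h₂
  suffices M₁ * M₂ = Q from this ▸ S.mul_mem hM₁ hM₂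
  apply map_injective hf
  change f.mapMatrix (M₁ * M₂) = f.mapMatrix Q
  have hQ : f.mapMatrix Q = f.mapMatrix σ * f.mapMatrix (P₁ * P₂) * (f.mapMatrix σ)⁻¹ := by
    rw [← map_mul, h, map_mul, mul_nonsing_inv_cancel_right _ _ hσ]
  rw [hQ, map_mul, map_mul, e₁, e₂]
  simp only [Matrix.mul_assoc, nonsing_inv_mul_cancel_left _ _ hσ]

theorem one_add_vecMulVec_mem_of_conj_mem [IsDomain R] {K : Type*} [Field K] {f : R →+* K}
    (hf : Function.Injective f) {S : Submonoid (Matrix n n R)} {q : R} (hq : q ≠ 0)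
    {z k l : n} (hl : l ≠ z) {a : n → R} {σ : Matrix n n R}
    (hσ : σ = q • 1 + vecMulVec (Pi.single z 1) a) (haz : a z = 0) {α β c : R}
    (hv : a ⬝ᵥ (Pi.single k α + Pi.single l β) = 0)
    (hk' : ∃ M ∈ S, f.mapMatrix M =
      f.mapMatrix σ * f.mapMatrix (1 + single k z (α * c * q ^ 2)) * (f.mapMatrix σ)⁻¹)
    (hl' : ∃ M ∈ S, f.mapMatrix M =
      f.mapMatrix σ * f.mapMatrix (1 + single l z (β * c * q ^ 2)) * (f.mapMatrix σ)⁻¹) :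
    1 + vecMulVec (Pi.single k α + Pi.single l β) ((c * q) • (q • Pi.single z 1 - a)) ∈ S := by
  have hau : a ⬝ᵥ Pi.single z 1 = 0 := by simp [haz]
  have hσu : IsUnit (f.mapMatrix σ).det := by
    rw [← RingHom.map_det]
    exact ((map_ne_zero_iff f hf).mpr (hσ ▸ det_smul_one_add_vecMulVec_ne_zero hq hau)).isUnit
  have hcol : ∀ i γ, (1 + single i z (γ * c * q ^ 2) : Matrix n n R) =
      1 + vecMulVec (Pi.single i γ) ((c * q * q) • Pi.single z 1) := by
    intro i γ
    rw [vecMulVec_smul, vecMulVec_single_single, smul_single]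
    ring_nf
  refine mem_of_mapMatrix_conj_mem hf hσu ?_ hk' hl'
  rw [hcol, hcol, one_add_vecMulVec_mul_one_add_vecMulVec (by simp [hl]), add_assoc,
    ← add_vecMulVec, hσ]
  exact smul_one_add_vecMulVec_mul_one_add_vecMulVec _ _ (by simp) hau hv

theorem SpecialLinearGroup.det_eq_one_and_mem_of_mem_map {H : Subgroup (SpecialLinearGroup n R)}
    {M : Matrix n n R} (hM : M ∈ H.toSubmonoid.map SpecialLinearGroup.coeMonoidHom) :
    M.det = 1 ∧ ∀ τ : SpecialLinearGroup n R, (τ : Matrix n n R) = M → τ ∈ H := by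
  obtain ⟨τ₀, hτ₀, rfl⟩ := hM
  exact ⟨τ₀.prop, fun τ hτ => (Subtype.ext hτ : τ = τ₀) ▸ hτ₀⟩

end Matrix

/-- The paper's index `1` is `0 : Fin (n + 3)`, and the size `n + 3` encodes `n ≥ 3`. -/
theorem lemma_5_7 (A : Type*) [CommRing A] [IsDomain A] (n : ℕ)
    (q : A) (hq : q ≠ 0) (a : Fin (n + 3) → A) (𝔭 : Ideal A)
    (ℰ : Subgroup (Matrix.SpecialLinearGroup (Fin (n + 3)) A))
    (σ : Matrix (Fin (n + 3)) (Fin (n + 3)) A)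
    (hσ : σ = q • (1 : Matrix (Fin (n + 3)) (Fin (n + 3)) A)
        + ∑ i ∈ Finset.univ.filter (fun i : Fin (n + 3) => i ≠ 0),
            Matrix.single 0 i (a i))
    (hi : ∀ (c : A) (i j : Fin (n + 3)), i ≠ 0 → j ≠ 0 → i ≠ j →
      ∀ τ : Matrix.SpecialLinearGroup (Fin (n + 3)) A,
        (τ : Matrix (Fin (n + 3)) (Fin (n + 3)) A) =
          1 + Matrix.single i j c → τ ∈ ℰ)
    (hii : ∀ b ∈ 𝔭, ∀ i : Fin (n + 3), i ≠ 0 →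
      ∃ τ : Matrix.SpecialLinearGroup (Fin (n + 3)) A, τ ∈ ℰ ∧
        (algebraMap A (FractionRing A)).mapMatrix
            (τ : Matrix (Fin (n + 3)) (Fin (n + 3)) A) =
          (algebraMap A (FractionRing A)).mapMatrix σ *
            (algebraMap A (FractionRing A)).mapMatrix
              (1 + Matrix.single i 0 (b * q ^ 2)) *
            ((algebraMap A (FractionRing A)).mapMatrix σ)⁻¹) :
    ∀ (k l : Fin (n + 3)), k ≠ 0 → l ≠ 0 → k ≠ l → ∀ b ∈ 𝔭,
      ((1 + Matrix.single k 0 (a l * b * q ^ 2)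
          - Matrix.single k k (a k * a l * b * q)
          - Matrix.single k l (a l ^ 2 * b * q)
          - Matrix.single l 0 (a k * b * q ^ 2)
          + Matrix.single l l (a k * a l * b * q)
          + Matrix.single l k (a k ^ 2 * b * q) :
            Matrix (Fin (n + 3)) (Fin (n + 3)) A).det = 1) ∧
      ∀ τ : Matrix.SpecialLinearGroup (Fin (n + 3)) A,
        (τ : Matrix (Fin (n + 3)) (Fin (n + 3)) A) =
          1 + Matrix.single k 0 (a l * b * q ^ 2)
            - Matrix.single k k (a k * a l * b * q)
            - Matrix.single k l (a l ^ 2 * b * q)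
            - Matrix.single l 0 (a k * b * q ^ 2)
            + Matrix.single l l (a k * a l * b * q)
            + Matrix.single l k (a k ^ 2 * b * q) → τ ∈ ℰ := by
  intro k l hk hl hkl b hb
  set S := ℰ.toSubmonoid.map SpecialLinearGroup.coeMonoidHom
  rw [← one_add_vecMulVec_single_add_single_eq]
  refine SpecialLinearGroup.det_eq_one_and_mem_of_mem_map ?_
  rw [sum_filter_ne_single_eq_vecMulVec_update] at hσ
  set a' := Function.update a 0 0
  set v : Fin (n + 3) → A := Pi.single k (a l) + Pi.single l (-a k)
  have hav : a' ⬝ᵥ v = 0 := by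
    simp only [v, dotProduct_add, dotProduct_single, a', Function.update_of_ne hk,
      Function.update_of_ne hl]
    ring
  obtain ⟨X, hX, hXσ⟩ := hii _ (𝔭.mul_mem_left (a l) hb) k hk
  obtain ⟨Y, hY, hYσ⟩ := hii _ (𝔭.mul_mem_left (-a k) hb) l hl
  have hXY := one_add_vecMulVec_mem_of_conj_mem (IsFractionRing.injective A (FractionRing A))
    hq hl hσ (S := S) (c := b) (by simp [a']) hav
    ⟨X, Submonoid.mem_map_of_mem _ hX, hXσ⟩ ⟨Y, Submonoid.mem_map_of_mem _ hY, hYσ⟩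
  have hC : 1 + vecMulVec v ((b * q) • (a' - Pi.single k (a k) - Pi.single l (a l))) ∈ S := by
    refine one_add_vecMulVec_single_add_single_mem (fun i j hi0 hj0 hij c => ?_) hk hl _ _
      (by simp [a', hk, hl]) (by simp [a', hk, hkl]) (by simp [a', hl, hkl.symm])
    exact ⟨⟨_, det_transvection_of_ne i j hij c⟩, hi c i j hi0 hj0 hij _ rfl, rfl⟩
  have hsplit : q • Pi.single 0 1 - Pi.single k (a k) - Pi.single l (a l) =
      (q • Pi.single 0 1 - a') + (a' - Pi.single k (a k) - Pi.single l (a l)) := by abel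
  rw [hsplit, smul_add]
  refine one_add_vecMulVec_add_mem hXY hC ?_
  rw [smul_dotProduct, sub_dotProduct, hav, sub_zero, smul_dotProduct, single_dotProduct]
  simp [v, hk.symm, hl.symm]
end

section
/- (Lemma 6.10(2) of the paper) For every f ∈ F̃' and every g ∈ F̃: f∘g − π(f∘g) = g∘f − π(g∘f) = g − π(g), where ∘ denotes composition modulo I^k. -/
/-- Truncation modulo `I^k`: the sum of the homogeneous components of degree `< k`
(`I` being the ideal of polynomials with zero constant term). -/
noncomputable def truncLT {A : Type*} [CommRing A] {σ : Type*} (k : ℕ)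
    (p : MvPolynomial σ A) : MvPolynomial σ A :=
  ∑ d ∈ Finset.range k, MvPolynomial.homogeneousComponent d p

/-- Composition of tuples of polynomials modulo `I^k`: substitute the tuple `g`
for the variables in `f`, then delete all monomials of total degree `≥ k`. -/
noncomputable def polyComp {A : Type*} [CommRing A] {σ : Type*} (k : ℕ)
    (f g : σ → MvPolynomial σ A) : σ → MvPolynomial σ A :=
  fun i => truncLT k (MvPolynomial.bind₁ g (f i))

/-- `f ∈ F̃`: each component has zero constant term and total degree `≤ k − 1`. -/
def memFtilde {A : Type*} [CommRing A] {σ : Type*} (k : ℕ)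
    (f : σ → MvPolynomial σ A) : Prop :=
  ∀ i, MvPolynomial.coeff 0 (f i) = 0 ∧ (f i).totalDegree ≤ k - 1

/-- `χ(f)`: the tuple of degree-1 homogeneous components. -/
noncomputable def chiLin {A : Type*} [CommRing A] {σ : Type*}
    (f : σ → MvPolynomial σ A) : σ → MvPolynomial σ A :=
  fun i => MvPolynomial.homogeneousComponent 1 (f i)

/-- `π(f)`: the tuple of degree-(k−1) homogeneous components. -/
noncomputable def piTop {A : Type*} [CommRing A] {σ : Type*} (k : ℕ)
    (f : σ → MvPolynomial σ A) : σ → MvPolynomial σ A :=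
  fun i => MvPolynomial.homogeneousComponent (k - 1) (f i)

/-- `f ∈ F̃'`: `f ∈ F̃` and `f(u) = u + π(f)(u)`. -/
def memFtilde' {A : Type*} [CommRing A] {σ : Type*} (k : ℕ)
    (f : σ → MvPolynomial σ A) : Prop :=
  memFtilde k f ∧ ∀ i, f i - MvPolynomial.homogeneousComponent (k - 1) (f i) =
    MvPolynomial.X i

/-!
Write `I` for the ideal of the variables. Since `f = X + π(f)` with `π(f) ∈ I^(k-1)`, substituting
`g` into `f` gives `g` plus `π(f) ∘ g ∈ I^(k-1)`, and substituting `f` into `g` agrees with `g`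
modulo `I^(k-1)` because `f` and the identity agree on the variables modulo that ideal.
So in both cases the composite agrees with `g` below degree `k - 1`, and truncation below degree
`k` followed by removal of the degree-`(k-1)` part keeps exactly those components.
-/

namespace MvPolynomial

variable {A : Type*} [CommRing A] {σ τ : Type*}

theorem coeff_truncLT (k : ℕ) (p : MvPolynomial σ A) (s : σ →₀ ℕ) :
    coeff s (truncLT k p) = if s.degree < k then coeff s p else 0 := by
  simp [truncLT, coeff_sum, coeff_homogeneousComponent, Finset.sum_ite_eq]

theorem homogeneousComponent_mem_pow_idealOfVars (n : ℕ) (p : MvPolynomial σ A) :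
    homogeneousComponent n p ∈ idealOfVars σ A ^ n :=
  (mem_pow_idealOfVars_iff' n _).mpr fun s hs => by
    rw [coeff_homogeneousComponent, if_neg hs.ne]

theorem mem_idealOfVars_of_coeff_zero {p : MvPolynomial σ A} (hp : coeff 0 p = 0) :
    p ∈ idealOfVars σ A := by
  rw [← pow_one (idealOfVars σ A), mem_pow_idealOfVars_iff']
  intro s hs
  rwa [(Finsupp.degree_eq_zero_iff s).mp (Nat.lt_one_iff.mp hs)]

theorem bind₁_mem_pow_idealOfVars {g : σ → MvPolynomial τ A} (hg : ∀ j, g j ∈ idealOfVars τ A)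
    {m : ℕ} {p : MvPolynomial σ A} (hp : p ∈ idealOfVars σ A ^ m) :
    bind₁ g p ∈ idealOfVars τ A ^ m := by
  have hI : (idealOfVars σ A).map (bind₁ g) ≤ idealOfVars τ A := by
    rw [Ideal.map_span, Ideal.span_le, ← Set.range_comp]
    rintro _ ⟨j, rfl⟩
    simpa using hg j
  refine Ideal.pow_right_mono hI m ?_
  rw [← Ideal.map_pow]
  exact Ideal.mem_map_of_mem _ hp

theorem bind₁_sub_self_mem {J : Ideal (MvPolynomial σ A)} {f : σ → MvPolynomial σ A}
    (hf : ∀ j, f j - X j ∈ J) (p : MvPolynomial σ A) : bind₁ f p - p ∈ J := by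
  have hcomp : (Ideal.Quotient.mkₐ A J).comp (bind₁ f) = Ideal.Quotient.mkₐ A J :=
    algHom_ext fun j => by simpa [Ideal.Quotient.eq] using hf j
  exact Ideal.Quotient.eq.mp (AlgHom.congr_fun hcomp p)

theorem truncLT_sub_homogeneousComponent_eq {k : ℕ} {q p : MvPolynomial σ A}
    (hqp : q - p ∈ idealOfVars σ A ^ (k - 1)) (hp : p.totalDegree ≤ k - 1) :
    truncLT k q - homogeneousComponent (k - 1) (truncLT k q)
      = p - homogeneousComponent (k - 1) p := by
  ext s
  have hlow := (mem_pow_idealOfVars_iff' _ _).mp hqp s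
  rw [coeff_sub] at hlow
  have hhigh : k - 1 < s.degree → coeff s p = 0 := fun h =>
    coeff_eq_zero_of_totalDegree_lt (hp.trans_lt h)
  simp only [coeff_sub, coeff_homogeneousComponent, coeff_truncLT]
  rcases lt_trichotomy s.degree (k - 1) with hs | hs | hs
  · simp [hs.ne, show s.degree < k by omega, sub_eq_zero.mp (hlow hs)]
  · simp [hs]
  · simp [hs.ne', hhigh hs, show ¬s.degree < k by omega]

end MvPolynomial

open MvPolynomial in
theorem lemma_6_10_2_general (A : Type*) [CommRing A] (n k : ℕ)
    (f g : Fin (n - 1) → MvPolynomial (Fin (n - 1)) A)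
    (hf : memFtilde' k f) (hg : memFtilde k g) :
    (∀ i, polyComp k f g i - piTop k (polyComp k f g) i = g i - piTop k g i)
    ∧ (∀ i, polyComp k g f i - piTop k (polyComp k g f) i = g i - piTop k g i) := by
  have hfX : ∀ j, f j - X j ∈ idealOfVars _ A ^ (k - 1) := fun j => by
    rw [← hf.2 j, sub_sub_cancel]
    exact homogeneousComponent_mem_pow_idealOfVars _ _
  have hfg : ∀ i, bind₁ g (f i) - g i ∈ idealOfVars _ A ^ (k - 1) := fun i => by
    rw [← bind₁_X_right g i, ← map_sub]
    exact bind₁_mem_pow_idealOfVars (fun j => mem_idealOfVars_of_coeff_zero (hg j).1) (hfX i)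
  exact ⟨fun i => truncLT_sub_homogeneousComponent_eq (hfg i) (hg i).2,
    fun i => truncLT_sub_homogeneousComponent_eq (bind₁_sub_self_mem hfX (g i)) (hg i).2⟩

/-- **Lemma 6.10(2) of the paper.** For `f ∈ F̃'` and `g ∈ F̃` (tuples of
polynomials in `n−1` variables, `n ≥ 2`, `k ≥ 2`):
`f∘g − π(f∘g) = g∘f − π(g∘f) = g − π(g)`, where `∘` is composition modulo `I^k`. -/
theorem lemma_6_10_2 (A : Type*) [CommRing A] (n k : ℕ) (hn : 2 ≤ n) (hk : 2 ≤ k)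
    (f g : Fin (n - 1) → MvPolynomial (Fin (n - 1)) A)
    (hf : memFtilde' k f) (hg : memFtilde k g) :
    (∀ i, polyComp k f g i - piTop k (polyComp k f g) i = g i - piTop k g i)
    ∧ (∀ i, polyComp k g f i - piTop k (polyComp k g f) i = g i - piTop k g i) :=
  lemma_6_10_2_general A n k f g hf hg
end
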